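/- arXiv:1409.5953 — 2 statements merged into one kernel-verified Lean document; each statement's English description precedes it below -/
import Mathlib

section
/- Let L be the restricted wreath product ℤ ≀ ℤ and let w ∈ FreeGroup (Fin 2) be the word w = ⁅x₀, ⁅x₀, x₁⁆⁆, where x₀, x₁ are the free generators and ⁅a,b⁆ = a*b*a⁻¹*b⁻¹. Then (1) w is an E-type iterated identity of L (indeed L has iterational depth at most 2 with respect to w), and (2) w is not an identity of L: there exists f : Fin 2 → L with FreeGroup.lift f w ≠ 1. -/
noncomputable section

/-- The verbal map: evaluate `w` with the variable of index `0` set to `x`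
and the variable of index `i` set to `f i` for `i ≠ 0`. -/
def verbalMap {n : ℕ} [NeZero n] {G : Type*} [Group G] (w : FreeGroup (Fin n))
    (f : Fin n → G) : G → G :=
  fun x => FreeGroup.lift (Function.update f 0 x) w

/-- `w` is an E-type (Engel type) iterated identity of `G`. -/
def IsEIteratedIdentity {n : ℕ} [NeZero n] (w : FreeGroup (Fin n)) (G : Type*) [Group G] : Prop :=
  ∀ f : Fin n → G, ∃ d : ℕ, 1 ≤ d ∧ (verbalMap w f)^[d] (f 0) = 1

/-- `G` has iterational depth at most `D` with respect to `w`. -/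
def DepthAtMost {n : ℕ} [NeZero n] (w : FreeGroup (Fin n)) (G : Type*) [Group G] (D : ℕ) : Prop :=
  ∀ f : Fin n → G, ∃ d : ℕ, 1 ≤ d ∧ d ≤ D ∧ (verbalMap w f)^[d] (f 0) = 1

/-- The shift automorphism action of `ℤ` on finitely supported configurations,
`(k • c) i = c (i - k)`, as a homomorphism into the automorphism group. -/
def wreathShift (R : Type*) [AddCommGroup R] :
    Multiplicative ℤ →* MulAut (Multiplicative (ℤ →₀ R)) where
  toFun k := AddEquiv.toMultiplicative
    (Finsupp.domCongr (Equiv.addRight (Multiplicative.toAdd k)) : (ℤ →₀ R) ≃+ (ℤ →₀ R))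
  map_one' := by
    refine MulEquiv.ext fun c => Multiplicative.toAdd.injective (Finsupp.ext fun i => ?_)
    simp [Finsupp.equivMapDomain_apply, Equiv.Perm.one_symm]
  map_mul' := by
    intro a b
    refine MulEquiv.ext fun c => Multiplicative.toAdd.injective (Finsupp.ext fun i => ?_)
    simp [Finsupp.equivMapDomain_apply, Equiv.Perm.mul_def, Equiv.symm_trans_apply,
      sub_eq_add_neg, add_comm, add_assoc, add_left_comm]

/-- The restricted wreath product `ℤ ≀ ℤ`. -/
abbrev WreathZZ : Type := Multiplicative (ℤ →₀ ℤ) ⋊[wreathShift ℤ] Multiplicative ℤ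

open scoped commutatorElement

/-!
The map `x ↦ ⁅x, ⁅x, y⁆⁆` sends everything into the derived subgroup, and for `c` in the derived
subgroup `⁅c, ⁅c, y⁆⁆ = 1` as soon as commutators commute with each other. In `ℤ ≀ ℤ` commutators
lie in the abelian base group, so two iterations always reach `1`. On the other hand, with `t` the
generator of the top group and `δ₀` the basis configuration, `⁅t, ⁅t, δ₀⁆⁆ = (σ - 1)² δ₀ ≠ 0`,
where `σ` is the shift.
-/

open SemidirectProduct

def engelWord : FreeGroup (Fin 2) :=
  ⁅FreeGroup.of (0 : Fin 2), ⁅FreeGroup.of (0 : Fin 2), FreeGroup.of (1 : Fin 2)⁆⁆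

section EngelWord

variable {G : Type*} [Group G]

theorem isEIteratedIdentity_of_depthAtMost {n : ℕ} [NeZero n] {w : FreeGroup (Fin n)} {D : ℕ}
    (h : DepthAtMost w G D) : IsEIteratedIdentity w G := fun f =>
  (h f).imp fun _ hd => ⟨hd.1, hd.2.2⟩

theorem verbalMap_engelWord (f : Fin 2 → G) (x : G) :
    verbalMap engelWord f x = ⁅x, ⁅x, f 1⁆⁆ := by
  simp [verbalMap, engelWord]

theorem depthAtMost_engelWord_two (hG : ∀ a b c d : G, Commute ⁅a, b⁆ ⁅c, d⁆) :
    DepthAtMost engelWord G 2 := by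
  intro f
  refine ⟨2, one_le_two, le_rfl, ?_⟩
  rw [Function.iterate_succ_apply', Function.iterate_one, verbalMap_engelWord,
    verbalMap_engelWord, commutatorElement_eq_one_iff_commute]
  exact hG _ _ _ _

end EngelWord

namespace SemidirectProduct

theorem commutatorElement_inr_inl {N G : Type*} [Group N] [Group G] {φ : G →* MulAut N}
    (g : G) (n : N) : ⁅(inr g : N ⋊[φ] G), inl n⁆ = (inl (φ g n * n⁻¹) : N ⋊[φ] G) := by
  simp [commutatorElement_def, inl_aut, mul_assoc]

theorem commute_of_right_eq_one {N G : Type*} [CommGroup N] [Group G] {φ : G →* MulAut N}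
    {x y : N ⋊[φ] G} (hx : x.right = 1) (hy : y.right = 1) : Commute x y := by
  ext <;> simp [hx, hy, mul_comm]

theorem commutatorElement_right {N G : Type*} [Group N] [CommGroup G] {φ : G →* MulAut N}
    (x y : N ⋊[φ] G) : ⁅x, y⁆.right = 1 := by
  rw [← rightHom_eq_right, map_commutatorElement, commutatorElement_eq_one_iff_commute]
  exact Commute.all _ _

end SemidirectProduct

theorem wreathShift_apply (R : Type*) [AddCommGroup R] (k : Multiplicative ℤ)
    (c : Multiplicative (ℤ →₀ R)) (i : ℤ) :
    (wreathShift R k c).toAdd i = c.toAdd (i - k.toAdd) := by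
  simp [wreathShift, Finsupp.equivMapDomain_apply, sub_eq_add_neg]

theorem wreathZZ_commute_commutatorElement (a b c d : WreathZZ) : Commute ⁅a, b⁆ ⁅c, d⁆ :=
  commute_of_right_eq_one (commutatorElement_right a b) (commutatorElement_right c d)

-- The value is `(σ - 1)² δ₀ = δ₂ - 2δ₁ + δ₀`, whose coefficient at `0` is `1`.
theorem lift_engelWord_wreathZZ_ne_one :
    FreeGroup.lift ![inr (.ofAdd 1), inl (.ofAdd (Finsupp.single 0 1))] engelWord ≠
      (1 : WreathZZ) := by
  intro h
  simp only [engelWord, map_commutatorElement, FreeGroup.lift_apply_of, Matrix.cons_val_zero,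
    Matrix.cons_val_one] at h
  rw [commutatorElement_inr_inl, commutatorElement_inr_inl,
    map_eq_one_iff _ inl_injective] at h
  have h0 := congrArg (fun c => c.toAdd 0) h
  simp [wreathShift_apply] at h0

/-- The word `⁅x₀, ⁅x₀, x₁⁆⁆` is an E-type iterated identity of `ℤ ≀ ℤ`
(of iterational depth at most `2`), but it is not an identity of `ℤ ≀ ℤ`. -/
theorem wreathZZ_engel_word
    (w : FreeGroup (Fin 2))
    (hw : w = ⁅FreeGroup.of (0 : Fin 2), ⁅FreeGroup.of (0 : Fin 2), FreeGroup.of (1 : Fin 2)⁆⁆) :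
    (IsEIteratedIdentity w WreathZZ ∧ DepthAtMost w WreathZZ 2) ∧
      ∃ f : Fin 2 → WreathZZ, FreeGroup.lift f w ≠ 1 := by
  obtain rfl : w = engelWord := hw
  have hdepth := depthAtMost_engelWord_two wreathZZ_commute_commutatorElement
  exact ⟨⟨isEIteratedIdentity_of_depthAtMost hdepth, hdepth⟩, _, lift_engelWord_wreathZZ_ne_one⟩
end
end

section
/- Let R ≥ 2, let G_R be the restricted wreath product (ℤ/Rℤ) ≀ ℤ, let m be the product of the distinct prime divisors of R (m = ∏_{p ∈ R.primeFactors} p), and let w ∈ FreeGroup (Fin 2) be the word w = ⁅x₀^m, x₁⁆, where ⁅a,b⁆ = a*b*a⁻¹*b⁻¹. Then (1) w is an E-type iterated identity of G_R, and (2) for every prime p and every k ≥ 1 with p^k ∣ R, the k-th Engel iteration of w is not an identity of G_R: there exists f : Fin 2 → G_R with φ_{w,f}^[k] (f 0) ≠ 1. -/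
noncomputable section

/-- The restricted wreath product `(ℤ/Rℤ) ≀ ℤ`. -/
abbrev WreathZModZ (R : ℕ) : Type :=
  Multiplicative (ℤ →₀ ZMod R) ⋊[wreathShift (ZMod R)] Multiplicative ℤ

open scoped commutatorElement
open SemidirectProduct Multiplicative

/-!
In `N ⋊ H` with `N` and `H` abelian, the map `x ↦ ⁅x ^ m, y⁆` takes values in `N`, and on `N` it
is `c ↦ ((1 - σ) c) ^ m`, with `σ` the action of the `H`-coordinate of `y`. So its `(j + 1)`-st
iterate is an `m ^ j`-th power in `N`; for `(ℤ/Rℤ) ≀ ℤ` and `m = rad R` this is trivial once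
`j = R`. Conversely, starting from `x = t` and `y = δ₀ t` (with `t` generating `ℤ` and `δᵢ` the
unit configuration at `i`), the first step gives `δₘ - δ₀`, and reading configurations as Laurent
polynomials, every later step multiplies by `1 - X` (then
raises to the `m`-th power), which keeps the constant coefficient of a polynomial. After `k`
steps it is `-m ^ (k - 1)`, nonzero modulo `R` when `p ^ k ∣ R`, because `m` is squarefree.
-/

theorem verbalMap_commutator_pow {G : Type*} [Group G] (m : ℕ) (f : Fin 2 → G) (x : G) :
    verbalMap ⁅FreeGroup.of (0 : Fin 2) ^ m, FreeGroup.of (1 : Fin 2)⁆ f x = ⁅x ^ m, f 1⁆ := by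
  rw [verbalMap, map_commutatorElement, map_pow, FreeGroup.lift_apply_of, FreeGroup.lift_apply_of,
    Function.update_self, Function.update_of_ne (by decide)]

theorem MonoidHom.iterate_map_pow_comp {M : Type*} [Monoid M] (ψ : M →* M) (m K : ℕ) (c : M) :
    (fun c => ψ c ^ m)^[K] c = ψ^[K] c ^ m ^ K := by
  induction K generalizing c with
  | zero => simp
  | succ K ih =>
    rw [Function.iterate_succ_apply, ih, iterate_map_pow, ← pow_mul,
      Function.iterate_succ_apply, ← pow_succ']

def diffHom {N H : Type*} [CommGroup N] [Group H] (φ : H →* MulAut N) (s : H) : N →* N :=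
  MonoidHom.id N / (φ s).toMonoidHom

theorem diffHom_apply {N H : Type*} [CommGroup N] [Group H] (φ : H →* MulAut N) (s : H) (c : N) :
    diffHom φ s c = c / φ s c := rfl

namespace SemidirectProduct

variable {N H : Type*}

theorem right_commutatorElement [Group N] [CommGroup H] {φ : H →* MulAut N}
    (g h : N ⋊[φ] H) : ⁅g, h⁆.right = 1 := by
  rw [← rightHom_eq_right, map_commutatorElement, commutatorElement_eq_one_iff_commute]
  exact Commute.all _ _

theorem commutatorElement_inl [CommGroup N] [Group H] {φ : H →* MulAut N}
    (a : N) (g : N ⋊[φ] H) : ⁅(inl a : N ⋊[φ] H), g⁆ = inl (diffHom φ g.right a) := by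
  rw [commutatorElement_def, diffHom_apply]
  ext
  · simp [mul_left, inv_left, inv_right, div_eq_mul_inv, mul_comm, mul_left_comm]
  · simp [mul_right, inv_right, div_eq_mul_inv]

theorem commutatorElement_inr_inl_mul_inr [Group N] [CommGroup H] {φ : H →* MulAut N}
    (u s : H) (b : N) :
    ⁅(inr u : N ⋊[φ] H), (inl b * inr s : N ⋊[φ] H)⁆ = inl (φ u b / b) := by
  have hsu : Commute (inr s : N ⋊[φ] H) (inr u)⁻¹ := ((Commute.all s u).map inr).inv_right
  rw [commutatorElement_def, map_div, inl_aut, mul_inv_rev]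
  simp only [mul_assoc, div_eq_mul_inv, map_inv]
  rw [hsu.left_comm, mul_inv_cancel_left]

theorem verbalMap_commutator_pow_inl [CommGroup N] [Group H] {φ : H →* MulAut N} (m : ℕ)
    (f : Fin 2 → N ⋊[φ] H) (c : N) :
    verbalMap ⁅FreeGroup.of (0 : Fin 2) ^ m, FreeGroup.of (1 : Fin 2)⁆ f (inl c)
      = inl (diffHom φ (f 1).right c ^ m) := by
  rw [verbalMap_commutator_pow, ← map_pow, commutatorElement_inl, map_pow]

theorem iterate_verbalMap_commutator_pow_inl [CommGroup N] [Group H] {φ : H →* MulAut N}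
    (m K : ℕ) (f : Fin 2 → N ⋊[φ] H) (c : N) :
    (verbalMap ⁅FreeGroup.of (0 : Fin 2) ^ m, FreeGroup.of (1 : Fin 2)⁆ f)^[K] (inl c)
      = inl ((diffHom φ (f 1).right)^[K] c ^ m ^ K) := by
  have h : Function.Semiconj inl (fun c => diffHom φ (f 1).right c ^ m)
      (verbalMap ⁅FreeGroup.of (0 : Fin 2) ^ m, FreeGroup.of (1 : Fin 2)⁆ f) :=
    fun c => (verbalMap_commutator_pow_inl m f c).symm
  rw [← (h.iterate_right K) c, MonoidHom.iterate_map_pow_comp]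

theorem isEIteratedIdentity_commutator_pow [CommGroup N] [CommGroup H] (φ : H →* MulAut N)
    {m K : ℕ} (hK : Monoid.exponent N ∣ m ^ K) :
    IsEIteratedIdentity ⁅FreeGroup.of (0 : Fin 2) ^ m, FreeGroup.of (1 : Fin 2)⁆ (N ⋊[φ] H) := by
  intro f
  refine ⟨K + 1, by omega, ?_⟩
  obtain ⟨c, hc⟩ : verbalMap ⁅FreeGroup.of (0 : Fin 2) ^ m, FreeGroup.of (1 : Fin 2)⁆ f (f 0)
      ∈ (inl : N →* N ⋊[φ] H).range := by
    rw [range_inl_eq_ker_rightHom, MonoidHom.mem_ker, verbalMap_commutator_pow]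
    exact right_commutatorElement _ _
  rw [Function.iterate_succ_apply, ← hc, iterate_verbalMap_commutator_pow_inl,
    Monoid.exponent_dvd_iff_forall_pow_eq_one.1 hK, map_one]

theorem iterate_succ_verbalMap_commutator_pow_inr [CommGroup N] [CommGroup H]
    {φ : H →* MulAut N} (m j : ℕ) (f : Fin 2 → N ⋊[φ] H) {u s : H} {b : N}
    (h0 : f 0 = inr u) (h1 : f 1 = inl b * inr s) :
    (verbalMap ⁅FreeGroup.of (0 : Fin 2) ^ m, FreeGroup.of (1 : Fin 2)⁆ f)^[j + 1] (f 0)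
      = inl ((diffHom φ s)^[j] (φ (u ^ m) b / b) ^ m ^ j) := by
  have hs : (f 1).right = s := by rw [h1, mul_right, right_inl, right_inr, one_mul]
  rw [Function.iterate_succ_apply, verbalMap_commutator_pow, h0, ← map_pow, h1,
    commutatorElement_inr_inl_mul_inr, iterate_verbalMap_commutator_pow_inl, hs]

end SemidirectProduct

theorem Nat.not_pow_succ_dvd_pow_of_squarefree {m p : ℕ} (hm : Squarefree m) (hp : p.Prime)
    (j : ℕ) : ¬ p ^ (j + 1) ∣ m ^ j := by
  rw [hp.pow_dvd_iff_le_factorization (pow_ne_zero _ hm.ne_zero), Nat.factorization_pow,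
    Finsupp.smul_apply, smul_eq_mul, not_le]
  calc j * m.factorization p ≤ j * 1 := Nat.mul_le_mul_left j (hm.natFactorization_le_one p)
    _ < j + 1 := by omega

theorem exponent_multiplicative_finsupp_zmod_dvd (ι : Type*) (R : ℕ) :
    Monoid.exponent (Multiplicative (ι →₀ ZMod R)) ∣ R :=
  Monoid.exponent_dvd_of_forall_pow_eq_one fun c => toAdd.injective <| Finsupp.ext fun i => by simp

section WreathShift

variable {M : Type*} [AddCommGroup M]

theorem diffHom_wreathShift_apply (s : Multiplicative ℤ) (c : Multiplicative (ℤ →₀ M)) (i : ℤ) :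
    toAdd (diffHom (wreathShift M) s c) i = toAdd c i - toAdd c (i - toAdd s) := rfl

/-- A configuration `c` is read as the Laurent polynomial `∑ c i X ^ i`; then
`diffHom (wreathShift M) (ofAdd 1)` is multiplication by `1 - X`. -/
def polynomialsWithConstCoeff (a : M) : Set (Multiplicative (ℤ →₀ M)) :=
  {c | (∀ i < 0, toAdd c i = 0) ∧ toAdd c 0 = a}

theorem mapsTo_diffHom_wreathShift_polynomialsWithConstCoeff (a : M) :
    Set.MapsTo (diffHom (wreathShift M) (ofAdd 1))
      (polynomialsWithConstCoeff a) (polynomialsWithConstCoeff a) := by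
  rintro c ⟨hneg, hzero⟩
  refine ⟨fun i hi => ?_, ?_⟩
  · rw [diffHom_wreathShift_apply, hneg i hi, hneg _ (by simp; omega), sub_zero]
  · rw [diffHom_wreathShift_apply, hzero, hneg _ (by simp), sub_zero]

theorem wreathShift_single_div_single_mem_polynomialsWithConstCoeff {u : Multiplicative ℤ}
    (hu : 0 < toAdd u) (a : M) :
    wreathShift M u (ofAdd (Finsupp.single 0 a)) / ofAdd (Finsupp.single 0 a)
      ∈ polynomialsWithConstCoeff (-a) := by
  have hshift (i : ℤ) : toAdd (wreathShift M u (ofAdd (Finsupp.single 0 a))) i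
      = Finsupp.single 0 a (i - toAdd u) := rfl
  refine ⟨fun i hi => ?_, ?_⟩
  · rw [toAdd_div, Finsupp.sub_apply, hshift, toAdd_ofAdd,
      Finsupp.single_eq_of_ne (by omega), Finsupp.single_eq_of_ne (by omega), sub_zero]
  · rw [toAdd_div, Finsupp.sub_apply, hshift, toAdd_ofAdd,
      Finsupp.single_eq_of_ne (by omega), Finsupp.single_eq_same, zero_sub]

end WreathShift

theorem WreathZModZ.exists_iterate_verbalMap_ne_one {R n j : ℕ} (hn : n ≠ 0)
    (hRn : ¬ R ∣ n ^ j) :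
    ∃ f : Fin 2 → WreathZModZ R,
      (verbalMap ⁅FreeGroup.of (0 : Fin 2) ^ n, FreeGroup.of (1 : Fin 2)⁆ f)^[j + 1] (f 0) ≠ 1 := by
  set δ : Multiplicative (ℤ →₀ ZMod R) := ofAdd (Finsupp.single 0 1)
  set f : Fin 2 → WreathZModZ R := ![inr (ofAdd 1), inl δ * inr (ofAdd 1)]
  refine ⟨f, ?_⟩
  rw [iterate_succ_verbalMap_commutator_pow_inr n j f rfl rfl, ne_eq,
    map_eq_one_iff _ inl_injective]
  have hstart : wreathShift (ZMod R) (ofAdd 1 ^ n) δ / δ ∈ polynomialsWithConstCoeff (-1) :=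
    wreathShift_single_div_single_mem_polynomialsWithConstCoeff (by simp; omega) 1
  have hconst := ((mapsTo_diffHom_wreathShift_polynomialsWithConstCoeff _).iterate j hstart).2
  intro h
  have h0 := congrArg (fun c : Multiplicative (ℤ →₀ ZMod R) => toAdd c 0) h
  simp only [toAdd_pow, Finsupp.smul_apply, hconst, toAdd_one, Finsupp.zero_apply] at h0
  rw [nsmul_eq_mul, mul_neg_one, neg_eq_zero, ZMod.natCast_eq_zero_iff] at h0
  exact hRn (by exact_mod_cast h0)

/-- With `m` the product of the distinct prime divisors of `R`, the word `⁅x₀^m, x₁⁆` is an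
E-type iterated identity of `(ℤ/Rℤ) ≀ ℤ`, but if `p^k ∣ R` for a prime `p` and `k ≥ 1`,
then the `k`-th Engel iteration of this word is not an identity of `(ℤ/Rℤ) ≀ ℤ`. -/
theorem wreathZModZ_word (R : ℕ) (hR : 2 ≤ R)
    (m : ℕ) (hm : m = ∏ p ∈ R.primeFactors, p)
    (w : FreeGroup (Fin 2))
    (hw : w = ⁅(FreeGroup.of (0 : Fin 2)) ^ m, FreeGroup.of (1 : Fin 2)⁆) :
    IsEIteratedIdentity w (WreathZModZ R) ∧
      ∀ p : ℕ, p.Prime → ∀ k : ℕ, 1 ≤ k → p ^ k ∣ R →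
        ∃ f : Fin 2 → WreathZModZ R, (verbalMap w f)^[k] (f 0) ≠ 1 := by
  rw [← Nat.radical_eq_prod_primeFactors] at hm
  subst hm hw
  have hm_sq : Squarefree (UniqueFactorizationMonoid.radical R) :=
    UniqueFactorizationMonoid.squarefree_radical
  have hexp : Monoid.exponent (Multiplicative (ℤ →₀ ZMod R))
      ∣ UniqueFactorizationMonoid.radical R ^ R :=
    (exponent_multiplicative_finsupp_zmod_dvd ℤ R).trans (Nat.dvd_radical_pow_self (by omega))
  refine ⟨isEIteratedIdentity_commutator_pow _ hexp, fun p hp k hk hpk => ?_⟩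
  obtain ⟨j, rfl⟩ : ∃ j, k = j + 1 := ⟨k - 1, by omega⟩
  exact WreathZModZ.exists_iterate_verbalMap_ne_one hm_sq.ne_zero
    fun hRm => Nat.not_pow_succ_dvd_pow_of_squarefree hm_sq hp j (hpk.trans hRm)
end
end
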